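/- Let l1, l2, l3 > 0 with l1 + l2 + l3 = 1, l3 < l1, l3 < l2, and max(l1,l2) < τ ≤ 1/2, and let F = F_τ^{l1,l2,l3}. Define the arc S3 = (τ−l2, l1+τ−l3) (of length 1−2*l3) and its subintervals J3'' = (τ−l2, l3), J1 = (l3, l1), J2 = (l1, l1+l2−l3), J3' = (l1+l2−l3, l1+τ−l3). Then: (i) F(J1) ⊆ S3 and F(J2) ⊆ S3; (ii) for every x ∈ J3' ∪ J3'', F(x) ∉ S3, F²(x) ∉ S3 and F³(x) ∈ S3; hence the first return map G of F to S3 equals F on J1 ∪ J2 and F³ on J3' ∪ J3''; (iii) setting φ(x) = (x − l3)/(1 − 2*l3) (mod 1), for all but finitely many x ∈ S3 one has φ(G(x)) = F'(φ(x)), where F' = F_{τ'}^{l1',l2',l3'} with l1' = (l1−l3)/(1−2*l3), l2' = (l2−l3)/(1−2*l3), l3' = l3/(1−2*l3) and τ' = (τ−l3)/(1−2*l3). In particular (l1',l2',l3') is the image of (l1,l2,l3) under one step of the projectivized fully subtractive algorithm, and 1/2 − τ' = (1/2 − τ)/(1 − 2*l3). -/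

import Mathlib

open Set
open scoped Classical

noncomputable section

local instance : Fact ((0:ℝ) < 1) := ⟨one_pos⟩

/-- Representative in `[0,1)` of a point of the circle `ℝ/ℤ`. -/
def rep (x : AddCircle (1:ℝ)) : ℝ := (AddCircle.equivIco 1 0 x : ℝ)

/-- Projection `ℝ → ℝ/ℤ`. -/
def toCirc (t : ℝ) : AddCircle (1:ℝ) := (t : AddCircle (1:ℝ))

/-- The fully flipped 3-interval exchange transformation `F_τ^{l1,l2,l3}`
(it depends only on `l1`, `l2`, `τ`, since `l3 = 1 - l1 - l2`). -/
def FF (l1 l2 τ : ℝ) (x : AddCircle (1:ℝ)) : AddCircle (1:ℝ) :=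
  if rep x < l1 then toCirc (l1 - rep x + τ)
  else if rep x < l1 + l2 then toCirc (2*l1 + l2 - rep x + τ)
  else toCirc (l1 + l2 + 1 - rep x + τ)

/-- One branch of the projectivized fully subtractive algorithm: the (smallest)
coordinate `l j` is subtracted from the others and everything is renormalized by
`1 - 2 * l j`. -/
def fsStepAt (j : Fin 3) (l : Fin 3 → ℝ) : Fin 3 → ℝ :=
  fun i => (if i = j then l j else l i - l j) / (1 - 2 * l j)

lemma rep_toCirc {t : ℝ} (h0 : 0 ≤ t) (h1 : t < 1) : rep (toCirc t) = t := by
  rw [rep, toCirc, AddCircle.coe_equivIco_mk_apply]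
  simp [Int.fract_eq_self.2 ⟨h0, h1⟩]

lemma toCirc_add_one (t : ℝ) : toCirc (t + 1) = toCirc t := by simp [toCirc]

lemma toCirc_shift {a b : ℝ} (h : a = b + 1) : toCirc a = toCirc b := by
  rw [h, toCirc_add_one]

lemma toCirc_inj {s t : ℝ} (hs0 : 0 ≤ s) (hs1 : s < 1) (ht0 : 0 ≤ t) (ht1 : t < 1)
    (h : toCirc s = toCirc t) : s = t := by
  have := congrArg rep h
  rwa [rep_toCirc hs0 hs1, rep_toCirc ht0 ht1] at this

lemma mem_img_Ioo {a b x : ℝ} (ha : 0 ≤ a) (hb : b ≤ 1) (hx0 : 0 ≤ x) (hx1 : x < 1) :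
    toCirc x ∈ toCirc '' Ioo a b ↔ x ∈ Ioo a b := by
  constructor
  · rintro ⟨t, ht, heq⟩
    have : t = x := toCirc_inj (ha.trans ht.1.le) (ht.2.trans_le hb) hx0 hx1 heq
    rwa [this] at ht
  · exact fun h => ⟨x, h, rfl⟩

lemma FF_eval {l1 l2 τ x : ℝ} (hx0 : 0 ≤ x) (hx1 : x < 1) :
    FF l1 l2 τ (toCirc x) =
      if x < l1 then toCirc (l1 - x + τ)
      else if x < l1 + l2 then toCirc (2*l1 + l2 - x + τ)
      else toCirc (l1 + l2 + 1 - x + τ) := by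
  simp only [FF, rep_toCirc hx0 hx1]

set_option maxHeartbeats 2000000 in
/-- Renormalization of `F_τ^{l1,l2,l3}` (case `l3 < l1, l2 < τ ≤ 1/2`): the first return
map to the arc `S3 = (τ-l2, l1+τ-l3)` equals `F` on `J1 ∪ J2` and `F³` on `J3' ∪ J3''`,
and after regluing the endpoints of `S3` and rescaling it is again a fully flipped
3-interval exchange transformation, whose length data is the image of `(l1,l2,l3)` under
the fully subtractive algorithm. -/
theorem statement5 (l1 l2 l3 τ : ℝ)
    (h1 : 0 < l1) (h2 : 0 < l2) (h3 : 0 < l3) (hsum : l1 + l2 + l3 = 1)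
    (h31 : l3 < l1) (h32 : l3 < l2) (hτmax : max l1 l2 < τ) (hτ : τ ≤ 1/2) :
    -- (i) J1 = (l3,l1) and J2 = (l1, l1+l2-l3) return to S3 after one step of F
    (∀ x ∈ Ioo l3 l1,
        FF l1 l2 τ (toCirc x) ∈ toCirc '' Ioo (τ - l2) (l1 + τ - l3)) ∧
    (∀ x ∈ Ioo l1 (l1 + l2 - l3),
        FF l1 l2 τ (toCirc x) ∈ toCirc '' Ioo (τ - l2) (l1 + τ - l3)) ∧
    -- (ii) J3' = (l1+l2-l3, l1+τ-l3) and J3'' = (τ-l2, l3) return after exactly 3 steps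
    (∀ x ∈ Ioo (l1 + l2 - l3) (l1 + τ - l3) ∪ Ioo (τ - l2) l3,
        FF l1 l2 τ (toCirc x) ∉ toCirc '' Ioo (τ - l2) (l1 + τ - l3) ∧
        (FF l1 l2 τ)^[2] (toCirc x) ∉ toCirc '' Ioo (τ - l2) (l1 + τ - l3) ∧
        (FF l1 l2 τ)^[3] (toCirc x) ∈ toCirc '' Ioo (τ - l2) (l1 + τ - l3)) ∧
    -- (iii) the first return map G, rescaled by φ(x) = (x - l3)/(1 - 2*l3) (mod 1),
    -- coincides (away from finitely many points) with F' = F_{τ'}^{l1',l2',l3'}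
    (let G : AddCircle (1:ℝ) → AddCircle (1:ℝ) := fun y =>
        if y ∈ toCirc '' (Ioo l3 l1 ∪ Ioo l1 (l1 + l2 - l3)) then FF l1 l2 τ y
        else (FF l1 l2 τ)^[3] y
     let φ : AddCircle (1:ℝ) → AddCircle (1:ℝ) := fun y =>
        toCirc ((rep y - l3) / (1 - 2*l3))
     let l1' := (l1 - l3)/(1 - 2*l3)
     let l2' := (l2 - l3)/(1 - 2*l3)
     let τ' := (τ - l3)/(1 - 2*l3)
     {y ∈ toCirc '' Ioo (τ - l2) (l1 + τ - l3) |
        φ (G y) ≠ FF l1' l2' τ' (φ y)}.Finite) ∧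
    -- (l1',l2',l3') is the image of (l1,l2,l3) under the fully subtractive algorithm
    fsStepAt 2 ![l1, l2, l3] =
      ![(l1 - l3)/(1 - 2*l3), (l2 - l3)/(1 - 2*l3), l3/(1 - 2*l3)] ∧
    -- and the parameter r = 1/2 - τ is rescaled accordingly
    1/2 - (τ - l3)/(1 - 2*l3) = (1/2 - τ)/(1 - 2*l3) := by
  have hl1τ : l1 < τ := (le_max_left l1 l2).trans_lt hτmax
  have hl2τ : l2 < τ := (le_max_right l1 l2).trans_lt hτmax
  have hD : (0:ℝ) < 1 - 2*l3 := by linarith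
  have hDne : (1:ℝ) - 2*l3 ≠ 0 := ne_of_gt hD
  have ha0 : (0:ℝ) ≤ τ - l2 := by linarith
  have hb1 : l1 + τ - l3 < 1 := by linarith
  have hal3 : τ - l2 < l3 := by linarith
  have hdiv : ∀ A B : ℝ, A < B → A/(1-2*l3) < B/(1-2*l3) := by
    intro A B h
    rw [div_lt_div_iff₀ hD hD]
    nlinarith
  have hdivle : ∀ A B : ℝ, A ≤ B → A/(1-2*l3) ≤ B/(1-2*l3) := by
    intro A B h
    rw [div_le_div_iff₀ hD hD]
    nlinarith
  -- one-step formulas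
  have hJ1 : ∀ x, l3 < x → x < l1 → FF l1 l2 τ (toCirc x) = toCirc (l1 - x + τ) := by
    intro x hx1 hx2
    rw [FF_eval (by linarith) (by linarith), if_pos hx2]
  have hI2 : ∀ x, l1 ≤ x → x < l1 + τ - l3 →
      FF l1 l2 τ (toCirc x) = toCirc (l1 - l3 + τ - x) := by
    intro x hx1 hx2
    rw [FF_eval (by linarith) (by linarith), if_neg (by push_neg; linarith),
      if_pos (by linarith)]
    exact toCirc_shift (by linarith)
  have hJ3'' : ∀ x, τ - l2 < x → x < l3 →
      FF l1 l2 τ (toCirc x) = toCirc (l1 - x + τ) := by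
    intro x hx1 hx2
    rw [FF_eval (by linarith) (by linarith), if_pos (by linarith)]
  -- three-step formulas on J3' and J3''
  have hT3' : ∀ x, l1 + l2 - l3 < x → x < l1 + τ - l3 →
      (FF l1 l2 τ)^[3] (toCirc x) = toCirc (1 - 2*l3 + τ - x) := by
    intro x hx1 hx2
    have e0 : (FF l1 l2 τ)^[3] (toCirc x)
        = FF l1 l2 τ (FF l1 l2 τ (FF l1 l2 τ (toCirc x))) := rfl
    rw [e0, hI2 x (by linarith) hx2]
    have e1 : FF l1 l2 τ (toCirc (l1 - l3 + τ - x)) = toCirc (x + l3) := by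
      rw [FF_eval (by linarith) (by linarith), if_pos (by linarith)]
      exact congrArg toCirc (by ring)
    rw [e1, FF_eval (by linarith) (by linarith), if_neg (by push_neg; linarith),
      if_neg (by push_neg; linarith)]
    exact toCirc_shift (by linarith)
  have hT3'' : ∀ x, τ - l2 < x → x < l3 →
      (FF l1 l2 τ)^[3] (toCirc x) = toCirc (τ - x) := by
    intro x hx1 hx2
    have e0 : (FF l1 l2 τ)^[3] (toCirc x)
        = FF l1 l2 τ (FF l1 l2 τ (FF l1 l2 τ (toCirc x))) := rfl
    rw [e0, hJ3'' x hx1 hx2]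
    have e1 : FF l1 l2 τ (toCirc (l1 - x + τ)) = toCirc (l1 + l2 + x) := by
      rw [FF_eval (by linarith) (by linarith), if_neg (by push_neg; linarith),
        if_pos (by linarith)]
      exact congrArg toCirc (by ring)
    rw [e1, FF_eval (by linarith) (by linarith), if_neg (by push_neg; linarith),
      if_neg (by push_neg; linarith)]
    exact toCirc_shift (by linarith)
  refine ⟨?_, ?_, ?_, ?_, ?_, ?_⟩
  · -- (i) for J1
    rintro x ⟨hx1, hx2⟩
    rw [hJ1 x hx1 hx2, mem_img_Ioo ha0 hb1.le (by linarith) (by linarith)]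
    exact ⟨by linarith, by linarith⟩
  · -- (i) for J2
    rintro x ⟨hx1, hx2⟩
    rw [hI2 x hx1.le (by linarith), mem_img_Ioo ha0 hb1.le (by linarith) (by linarith)]
    exact ⟨by linarith, by linarith⟩
  · -- (ii)
    rintro x (⟨hx1, hx2⟩ | ⟨hx1, hx2⟩)
    · -- J3'
      have e1 : FF l1 l2 τ (toCirc x) = toCirc (l1 - l3 + τ - x) :=
        hI2 x (by linarith) hx2
      have e2 : (FF l1 l2 τ)^[2] (toCirc x) = toCirc (x + l3) := by
        have e0 : (FF l1 l2 τ)^[2] (toCirc x) = FF l1 l2 τ (FF l1 l2 τ (toCirc x)) := rfl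
        rw [e0, e1, FF_eval (by linarith) (by linarith), if_pos (by linarith)]
        exact congrArg toCirc (by ring)
      refine ⟨?_, ?_, ?_⟩
      · rw [e1, mem_img_Ioo ha0 hb1.le (by linarith) (by linarith)]
        rintro ⟨p, q⟩; linarith
      · rw [e2, mem_img_Ioo ha0 hb1.le (by linarith) (by linarith)]
        rintro ⟨p, q⟩; linarith
      · rw [hT3' x hx1 hx2, mem_img_Ioo ha0 hb1.le (by linarith) (by linarith)]
        exact ⟨by linarith, by linarith⟩
    · -- J3''
      have e1 : FF l1 l2 τ (toCirc x) = toCirc (l1 - x + τ) := hJ3'' x hx1 hx2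
      have e2 : (FF l1 l2 τ)^[2] (toCirc x) = toCirc (l1 + l2 + x) := by
        have e0 : (FF l1 l2 τ)^[2] (toCirc x) = FF l1 l2 τ (FF l1 l2 τ (toCirc x)) := rfl
        rw [e0, e1, FF_eval (by linarith) (by linarith), if_neg (by push_neg; linarith),
          if_pos (by linarith)]
        exact congrArg toCirc (by ring)
      refine ⟨?_, ?_, ?_⟩
      · rw [e1, mem_img_Ioo ha0 hb1.le (by linarith) (by linarith)]
        rintro ⟨p, q⟩; linarith
      · rw [e2, mem_img_Ioo ha0 hb1.le (by linarith) (by linarith)]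
        rintro ⟨p, q⟩; linarith
      · rw [hT3'' x hx1 hx2, mem_img_Ioo ha0 hb1.le (by linarith) (by linarith)]
        exact ⟨by linarith, by linarith⟩
  · -- (iii)
    intro G φ l1' l2' τ'
    have hsum12 : l1' + l2' = (l1 + l2 - 2*l3)/(1 - 2*l3) := by
      show (l1 - l3)/(1-2*l3) + (l2 - l3)/(1-2*l3) = _
      rw [← add_div]; ring_nf
    apply Set.Finite.subset
      (((Set.finite_singleton (toCirc (l1 + l2 - l3))).insert (toCirc l1)).insert (toCirc l3))
    rintro y ⟨⟨x, hx, rfl⟩, hne⟩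
    by_contra hc
    have hc1 : toCirc x ≠ toCirc l3 := fun h => hc (Or.inl h)
    have hc2 : toCirc x ≠ toCirc l1 := fun h => hc (Or.inr (Or.inl h))
    have hc3 : toCirc x ≠ toCirc (l1 + l2 - l3) := fun h => hc (Or.inr (Or.inr h))
    have hx1 : τ - l2 < x := hx.1
    have hx2 : x < l1 + τ - l3 := hx.2
    have hxne3 : x ≠ l3 := fun h => hc1 (by rw [h])
    have hxne1 : x ≠ l1 := fun h => hc2 (by rw [h])
    have hxne2 : x ≠ l1 + l2 - l3 := fun h => hc3 (by rw [h])
    apply hne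
    -- compute φ (toCirc x)
    have hφx : φ (toCirc x) = toCirc ((x - l3) / (1 - 2*l3)) := by
      show toCirc ((rep (toCirc x) - l3) / (1 - 2*l3)) = _
      rw [rep_toCirc (by linarith) (by linarith)]
    -- G's branch condition
    have hGmem : ∀ z : ℝ, 0 ≤ z → z < 1 →
        (toCirc z ∈ toCirc '' (Ioo l3 l1 ∪ Ioo l1 (l1 + l2 - l3)) ↔
          z ∈ Ioo l3 l1 ∪ Ioo l1 (l1 + l2 - l3)) := by
      intro z hz0 hz1
      constructor
      · rintro ⟨t, ht, heq⟩
        have ht0 : 0 ≤ t := by rcases ht with ⟨p, q⟩ | ⟨p, q⟩ <;> linarith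
        have ht1 : t < 1 := by rcases ht with ⟨p, q⟩ | ⟨p, q⟩ <;> linarith
        have : t = z := toCirc_inj ht0 ht1 hz0 hz1 heq
        rwa [this] at ht
      · exact fun h => ⟨z, h, rfl⟩
    rcases lt_or_gt_of_ne hxne3 with hx3 | hx3
    · -- J3'' case : τ - l2 < x < l3
      have hG : G (toCirc x) = toCirc (τ - x) := by
        show (if _ then _ else _) = _
        rw [if_neg, hT3'' x hx1 hx3]
        rw [hGmem x (by linarith) (by linarith)]
        rintro (⟨p, q⟩ | ⟨p, q⟩) <;> linarith
      rw [hG, hφx]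
      have hL : φ (toCirc (τ - x)) = toCirc ((τ - x - l3) / (1 - 2*l3)) := by
        show toCirc ((rep (toCirc (τ - x)) - l3) / (1 - 2*l3)) = _
        rw [rep_toCirc (by linarith) (by linarith)]
      rw [hL]
      rw [← toCirc_add_one ((x - l3) / (1 - 2*l3))]
      have hru : (x - l3) / (1 - 2*l3) + 1 = (x + 1 - 3*l3) / (1 - 2*l3) := by
        rw [eq_div_iff hDne, add_mul, div_mul_cancel₀ _ hDne]; ring
      have hbc1 : ¬ (x + 1 - 3*l3) / (1 - 2*l3) < l1' :=
        not_lt.2 (hdivle _ _ (by linarith))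
      have hbc2 : ¬ (x + 1 - 3*l3) / (1 - 2*l3) < l1' + l2' := by
        rw [hsum12]
        exact not_lt.2 (hdivle _ _ (by linarith))
      rw [hru, FF_eval (div_nonneg (by linarith) hD.le) (by rw [div_lt_one hD]; linarith)]
      rw [if_neg hbc1, if_neg hbc2]
      refine (toCirc_shift ?_).symm
      show (l1 - l3)/(1-2*l3) + (l2 - l3)/(1-2*l3) + 1 - _ + (τ - l3)/(1-2*l3) = _
      field_simp
      ring_nf
      rw [show l1 = 1 - l2 - l3 by linarith]; ring
    · rcases lt_or_gt_of_ne hxne1 with hx1' | hx1'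
      · -- J1 case : l3 < x < l1
        have hG : G (toCirc x) = toCirc (l1 - x + τ) := by
          show (if _ then _ else _) = _
          rw [if_pos ⟨x, Or.inl ⟨hx3, hx1'⟩, rfl⟩, hJ1 x hx3 hx1']
        rw [hG, hφx]
        have hL : φ (toCirc (l1 - x + τ)) = toCirc ((l1 - x + τ - l3) / (1 - 2*l3)) := by
          show toCirc ((rep (toCirc (l1 - x + τ)) - l3) / (1 - 2*l3)) = _
          rw [rep_toCirc (by linarith) (by linarith)]
        rw [hL, FF_eval (div_nonneg (by linarith) hD.le) (by rw [div_lt_one hD]; linarith)]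
        rw [if_pos (hdiv _ _ (by linarith))]
        refine (congrArg toCirc ?_).symm
        show (l1 - l3)/(1-2*l3) - _ + (τ - l3)/(1-2*l3) = _
        ring
      · rcases lt_or_gt_of_ne hxne2 with hx2' | hx2'
        · -- J2 case : l1 < x < l1 + l2 - l3
          have hG : G (toCirc x) = toCirc (l1 - l3 + τ - x) := by
            show (if _ then _ else _) = _
            rw [if_pos ⟨x, Or.inr ⟨hx1', hx2'⟩, rfl⟩, hI2 x hx1'.le (by linarith)]
          rw [hG, hφx]
          have hL : φ (toCirc (l1 - l3 + τ - x))
              = toCirc ((l1 - 2*l3 + τ - x) / (1 - 2*l3)) := by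
            show toCirc ((rep (toCirc (l1 - l3 + τ - x)) - l3) / (1 - 2*l3)) = _
            rw [rep_toCirc (by linarith) (by linarith)]
            exact congrArg toCirc (by ring)
          have hbc1 : ¬ (x - l3) / (1 - 2*l3) < l1' :=
            not_lt.2 (hdivle _ _ (by linarith))
          have hbc2 : (x - l3) / (1 - 2*l3) < l1' + l2' := by
            rw [hsum12]
            exact hdiv _ _ (by linarith)
          rw [hL, FF_eval (div_nonneg (by linarith) hD.le) (by rw [div_lt_one hD]; linarith)]
          rw [if_neg hbc1, if_pos hbc2]
          refine (toCirc_shift ?_).symm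
          show 2*((l1 - l3)/(1-2*l3)) + (l2 - l3)/(1-2*l3) - _ + (τ - l3)/(1-2*l3) = _
          field_simp
          ring_nf
          nlinarith [hsum, hD]
        · -- J3' case : l1 + l2 - l3 < x < l1 + τ - l3
          have hG : G (toCirc x) = toCirc (1 - 2*l3 + τ - x) := by
            show (if _ then _ else _) = _
            rw [if_neg, hT3' x hx2' hx2]
            rw [hGmem x (by linarith) (by linarith)]
            rintro (⟨p, q⟩ | ⟨p, q⟩) <;> linarith
          rw [hG, hφx]
          have hL : φ (toCirc (1 - 2*l3 + τ - x))
              = toCirc ((1 - 3*l3 + τ - x) / (1 - 2*l3)) := by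
            show toCirc ((rep (toCirc (1 - 2*l3 + τ - x)) - l3) / (1 - 2*l3)) = _
            rw [rep_toCirc (by linarith) (by linarith)]
            exact congrArg toCirc (by ring)
          have hbc1 : ¬ (x - l3) / (1 - 2*l3) < l1' :=
            not_lt.2 (hdivle _ _ (by linarith))
          have hbc2 : ¬ (x - l3) / (1 - 2*l3) < l1' + l2' := by
            rw [hsum12]
            exact not_lt.2 (hdivle _ _ (by linarith))
          rw [hL, FF_eval (div_nonneg (by linarith) hD.le) (by rw [div_lt_one hD]; linarith)]
          rw [if_neg hbc1, if_neg hbc2]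
          refine (toCirc_shift ?_).symm
          show (l1 - l3)/(1-2*l3) + (l2 - l3)/(1-2*l3) + 1 - _ + (τ - l3)/(1-2*l3) = _
          field_simp
          ring_nf
          rw [show l1 = 1 - l2 - l3 by linarith]; ring
  · -- fully subtractive step
    funext i
    fin_cases i <;> simp [fsStepAt]
  · -- parameter rescaling
    field_simp
    ring
end
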